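/- arXiv:0907.2009 — 3 statements merged into one kernel-verified Lean document; each statement's English description precedes it below -/
import Mathlib

section
/- Let W be a non-negative random variable with E W = 1 and let W^e be a random variable having the equilibrium distribution with respect to W. Then for every β > 0, d_K(L(W), Exp(1)) ≤ 12β + 2·P[|W^e − W| > β]. -/
/-!
Write `F` and `Fₑ` for the distribution functions of `W` and `Wᵉ`, and `p = P[|Wᵉ - W| > β]`.
The equilibrium density gives `Fₑ t = ∫₀ᵗ (1 - F)` for `t ≥ 0`; in particular `Fₑ` is
`1`-Lipschitz, so the coupling yields `|F - Fₑ| ≤ β + p`. Hence `Fₑ` solves `G' = 1 - G`,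
`G 0 = 0` up to an error `β + p`; its exact solution is the exponential distribution function
`1 - exp (-t)`, and the integrating factor `exp t` gives `|Fₑ t - (1 - exp (-t))| ≤ β + p`,
so `|F t - (1 - exp (-t))| ≤ 2 (β + p)`.
-/

open MeasureTheory ProbabilityTheory Set
open scoped ENNReal

noncomputable section

/-- The Kolmogorov distance between two measures on `ℝ`. -/
def dK (P Q : Measure ℝ) : ℝ :=
  ⨆ z : ℝ, |(P (Iic z)).toReal - (Q (Iic z)).toReal|

/-- `We` has the equilibrium distribution with respect to `W`: its law has density
`P[W > x] / E W` on `[0,∞)` with respect to Lebesgue measure. -/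
def IsEquilibrium {Ω : Type*} [MeasurableSpace Ω] (μ : Measure Ω) (W We : Ω → ℝ) : Prop :=
  Measure.map We μ =
    volume.withDensity (fun x =>
      if 0 ≤ x then μ {ω | x < W ω} / ENNReal.ofReal (∫ ω, W ω ∂μ) else 0)

open Real

lemma abs_sub_one_sub_exp_neg_le_of_hasDerivWithinAt {G g : ℝ → ℝ} {ε t : ℝ}
    (hG0 : G 0 = 0) (hG : ContinuousOn G (Ici 0))
    (hG' : ∀ s, 0 ≤ s → HasDerivWithinAt G (g s) (Ici s) s)
    (hε : ∀ s, 0 ≤ s → |g s + G s - 1| ≤ ε) (ht : 0 ≤ t) :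
    |G t - (1 - exp (-t))| ≤ ε * (1 - exp (-t)) := by
  -- integrating factor: `exp s * (G s - 1) + 1` has right derivative `exp s * (g s + G s - 1)`
  have hf : |exp t * (G t - 1) + 1| ≤ ε * (exp t - 1) := by
    refine image_norm_le_of_norm_deriv_right_le_deriv_boundary
      (f := fun s => exp s * (G s - 1) + 1)
      (f' := fun s => exp s * (g s + G s - 1)) (B := fun s => ε * (exp s - 1))
      (B' := fun s => ε * exp s) ?_ ?_ ?_ ?_ ?_ ⟨ht, le_rfl⟩
    · exact (continuous_exp.continuousOn.mul
        ((hG.mono Icc_subset_Ici_self).sub continuousOn_const)).add continuousOn_const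
    · intro s hs
      convert (((hasDerivAt_exp s).hasDerivWithinAt).fun_mul ((hG' s hs.1).sub_const 1)).add_const 1
        using 1
      ring
    · simp [hG0]
    · intro s
      simpa using ((hasDerivAt_exp s).sub_const 1).const_mul ε
    · intro s hs
      rw [Real.norm_eq_abs, abs_mul, abs_of_pos (exp_pos s), mul_comm]
      exact mul_le_mul_of_nonneg_right (hε s hs.1) (exp_pos s).le
  have key : G t - (1 - exp (-t)) = exp (-t) * (exp t * (G t - 1) + 1) := by
    rw [mul_add, ← mul_assoc, ← exp_add, neg_add_cancel, exp_zero]; ring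
  calc |G t - (1 - exp (-t))| = exp (-t) * |exp t * (G t - 1) + 1| := by
        rw [key, abs_mul, abs_of_pos (exp_pos _)]
    _ ≤ exp (-t) * (ε * (exp t - 1)) := by gcongr
    _ = ε * (1 - exp (-t)) := by
        rw [mul_left_comm, mul_sub, ← exp_add, neg_add_cancel, exp_zero, mul_one]

lemma StieltjesFunction.abs_sub_one_sub_exp_neg_le (F : StieltjesFunction ℝ) {ε t : ℝ}
    (hF : ∀ s, 0 ≤ s → |F s - ∫ x in 0..s, (1 - F x)| ≤ ε) (ht : 0 ≤ t) :
    |F t - (1 - exp (-t))| ≤ 2 * ε := by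
  have hint : ∀ a b, IntervalIntegrable (fun x => 1 - F x) volume a b := fun a b =>
    (intervalIntegrable_const.sub (F.mono.intervalIntegrable))
  have hprim := abs_sub_one_sub_exp_neg_le_of_hasDerivWithinAt
    (G := fun s => ∫ x in 0..s, (1 - F x)) (g := fun s => 1 - F s) (ε := ε) (by simp)
    (intervalIntegral.continuous_primitive hint 0).continuousOn
    (fun s _ => intervalIntegral.integral_hasDerivWithinAt_right (hint 0 s)
      ((F.mono.measurable.const_sub 1).stronglyMeasurable.stronglyMeasurableAtFilter)
      (continuousWithinAt_const.sub ((F.right_continuous s).mono Ioi_subset_Ici_self)))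
    (fun s hs => by rw [← abs_neg]; convert hF s hs using 2; ring) ht
  have hε : 0 ≤ ε := (abs_nonneg _).trans (hF 0 le_rfl)
  have hexp : 1 - exp (-t) ≤ 1 := by linarith [exp_pos (-t)]
  calc |F t - (1 - exp (-t))|
      ≤ |F t - ∫ x in 0..t, (1 - F x)| + |(∫ x in 0..t, (1 - F x)) - (1 - exp (-t))| :=
        abs_sub_le _ _ _
    _ ≤ ε + ε * 1 := add_le_add (hF t ht) (hprim.trans (mul_le_mul_of_nonneg_left hexp hε))
    _ = 2 * ε := by ring

section Coupling

variable {Ω : Type*} [MeasurableSpace Ω] {μ : Measure Ω} [IsProbabilityMeasure μ]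
  {X Y : Ω → ℝ}

lemma cdf_map_eq_measureReal (hX : Measurable X) (t : ℝ) :
    cdf (μ.map X) t = μ.real {ω | X ω ≤ t} := by
  have := Measure.isProbabilityMeasure_map (μ := μ) hX.aemeasurable
  rw [cdf_eq_real, map_measureReal_apply hX measurableSet_Iic]
  rfl

lemma cdf_map_le_cdf_map_add (hX : Measurable X) (hY : Measurable Y) (t β : ℝ) :
    cdf (μ.map X) t ≤ cdf (μ.map Y) (t + β) + μ.real {ω | β < |Y ω - X ω|} := by
  rw [cdf_map_eq_measureReal hX, cdf_map_eq_measureReal hY]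
  refine (measureReal_mono fun ω (hω : X ω ≤ t) => ?_).trans (measureReal_union_le _ _)
  by_cases hβ : β < |Y ω - X ω|
  · exact Or.inr hβ
  · exact Or.inl (show Y ω ≤ t + β by linarith [(abs_le.1 (not_lt.1 hβ)).2])

lemma abs_cdf_map_sub_cdf_map_le (hX : Measurable X) (hY : Measurable Y)
    (hY_lip : ∀ a b, a ≤ b → cdf (μ.map Y) b ≤ cdf (μ.map Y) a + (b - a))
    {β : ℝ} (hβ : 0 ≤ β) (t : ℝ) :
    |cdf (μ.map X) t - cdf (μ.map Y) t| ≤ β + μ.real {ω | β < |Y ω - X ω|} := by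
  have hXY := cdf_map_le_cdf_map_add (μ := μ) hX hY t β
  have hYX := cdf_map_le_cdf_map_add (μ := μ) hY hX (t - β) β
  simp_rw [abs_sub_comm (X _)] at hYX
  have := hY_lip t (t + β) (by linarith)
  have := hY_lip (t - β) t (by linarith)
  rw [sub_add_cancel] at hYX
  rw [abs_le]; constructor <;> linarith

end Coupling

lemma cdf_le_cdf_add_of_withDensity_le_one {ρ : Measure ℝ} [IsProbabilityMeasure ρ]
    {f : ℝ → ℝ≥0∞} (hρ : ρ = volume.withDensity f) (hf : ∀ x, f x ≤ 1) {a b : ℝ}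
    (hab : a ≤ b) : cdf ρ b ≤ cdf ρ a + (b - a) := by
  have hle : ρ (Ioc a b) ≤ volume (Ioc a b) := by
    rw [hρ]
    calc volume.withDensity f (Ioc a b) ≤ volume.withDensity 1 (Ioc a b) :=
          withDensity_mono (ae_of_all _ hf) _
      _ = volume (Ioc a b) := by rw [withDensity_one]
  rw [← measure_cdf ρ, StieltjesFunction.measure_Ioc, Real.volume_Ioc,
    ENNReal.ofReal_le_ofReal_iff (sub_nonneg.2 hab)] at hle
  linarith

lemma cdf_eq_integral_one_sub_cdf {ν ρ : Measure ℝ} [IsProbabilityMeasure ν]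
    [IsProbabilityMeasure ρ]
    (hρ : ρ = volume.withDensity (fun x => if 0 ≤ x then ν (Ioi x) else 0)) {t : ℝ}
    (ht : 0 ≤ t) : cdf ρ t = ∫ x in 0..t, (1 - cdf ν x) := by
  have htail : ∀ x, ν (Ioi x) = ENNReal.ofReal (1 - cdf ν x) := fun x => by
    rw [← compl_Iic, prob_compl_eq_one_sub measurableSet_Iic, ← ofReal_cdf,
      ENNReal.ofReal_sub _ (cdf_nonneg ν x), ENNReal.ofReal_one]
  have hdens : (fun x => if 0 ≤ x then ν (Ioi x) else 0)
      = (Ici 0).indicator (fun x => ENNReal.ofReal (1 - cdf ν x)) := by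
    ext x; simp [indicator_apply, htail]
  have hmeas : Measurable fun x => 1 - cdf ν x := (monotone_cdf ν).measurable.const_sub 1
  rw [cdf_eq_real, measureReal_def, hρ, withDensity_apply _ measurableSet_Iic, hdens,
    lintegral_indicator measurableSet_Ici, Measure.restrict_restrict measurableSet_Ici,
    Ici_inter_Iic, intervalIntegral.integral_of_le ht, ← integral_Icc_eq_integral_Ioc,
    integral_eq_lintegral_of_nonneg_ae (ae_of_all _ fun x => sub_nonneg.2 (cdf_le_one ν x))
      hmeas.aestronglyMeasurable]

theorem kolmogorov_bound_equilibrium_coupling_general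
    {Ω : Type*} [MeasurableSpace Ω] (μ : Measure Ω) [IsProbabilityMeasure μ]
    (W We : Ω → ℝ) (hWmeas : Measurable W) (hWemeas : Measurable We)
    (hWnonneg : ∀ ω, 0 ≤ W ω)
    (hEW : ∫ ω, W ω ∂μ = 1)
    (hWe : IsEquilibrium μ W We)
    (β : ℝ) (hβ : 0 < β) :
    dK (Measure.map W μ) (expMeasure 1)
      ≤ 12 * β + 2 * (μ {ω | β < |We ω - W ω|}).toReal := by
  have := Measure.isProbabilityMeasure_map (μ := μ) hWmeas.aemeasurable
  have := Measure.isProbabilityMeasure_map (μ := μ) hWemeas.aemeasurable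
  have := isProbabilityMeasure_expMeasure one_pos
  set p := μ.real {ω | β < |We ω - W ω|}
  have hρ : μ.map We = volume.withDensity
      (fun x => if 0 ≤ x then μ.map W (Ioi x) else 0) := by
    simp only [IsEquilibrium, hEW, ENNReal.ofReal_one, div_one] at hWe
    simp_rw [hWe, Measure.map_apply hWmeas measurableSet_Ioi]
    rfl
  have hclose : ∀ t, |cdf (μ.map W) t - cdf (μ.map We) t| ≤ β + p :=
    abs_cdf_map_sub_cdf_map_le hWmeas hWemeas
      (fun a b hab => cdf_le_cdf_add_of_withDensity_le_one hρ
        (fun x => by split_ifs <;> simp [prob_le_one]) hab) hβ.le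
  have hexp : ∀ t, 0 ≤ t → |cdf (μ.map W) t - (1 - exp (-t))| ≤ 2 * (β + p) := fun t ht =>
    (cdf (μ.map W)).abs_sub_one_sub_exp_neg_le
      (fun s hs => cdf_eq_integral_one_sub_cdf hρ hs ▸ hclose s) ht
  refine ciSup_le fun z => ?_
  change |(μ.map W).real (Iic z) - (expMeasure 1).real (Iic z)| ≤ 12 * β + 2 * p
  rw [← cdf_eq_real, ← cdf_eq_real, cdf_expMeasure_eq one_pos, one_mul]
  split_ifs with hz
  · linarith [hexp z hz]
  · have hW : cdf (μ.map W) z = 0 := by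
      rw [cdf_map_eq_measureReal hWmeas]
      convert measureReal_empty (μ := μ)
      exact eq_empty_of_forall_notMem fun ω (hω : W ω ≤ z) => hz (hWnonneg ω |>.trans hω)
    rw [hW, sub_zero, abs_zero]
    positivity

theorem kolmogorov_bound_equilibrium_coupling
    {Ω : Type*} [MeasurableSpace Ω] (μ : Measure Ω) [IsProbabilityMeasure μ]
    (W We : Ω → ℝ) (hWmeas : Measurable W) (hWemeas : Measurable We)
    (hWnonneg : ∀ ω, 0 ≤ W ω) (hWint : Integrable W μ)
    (hEW : ∫ ω, W ω ∂μ = 1)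
    (hWe : IsEquilibrium μ W We)
    (β : ℝ) (hβ : 0 < β) :
    dK (Measure.map W μ) (expMeasure 1)
      ≤ 12 * β + 2 * (μ {ω | β < |We ω - W ω|}).toReal :=
  kolmogorov_bound_equilibrium_coupling_general μ W We hWmeas hWemeas hWnonneg hEW hWe β hβ

end
end

section
/- Let W be a non-negative random variable with E W = 1 and let W^e be a random variable having the equilibrium distribution with respect to W, defined on the same probability space. Then for every β > 0, d_K(L(W^e), Exp(1)) ≤ β + P[|W^e − W| > β]. -/
open MeasureTheory ProbabilityTheory Set

noncomputable section

/-- The Wasserstein distance between two measures on `ℝ`: the supremum of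
`|∫ h dP - ∫ h dQ|` over all `1`-Lipschitz functions `h : ℝ → ℝ`. -/
def dW (P Q : Measure ℝ) : ℝ :=
  ⨆ h : {h : ℝ → ℝ // LipschitzWith 1 h}, |∫ x, h.1 x ∂P - ∫ x, h.1 x ∂Q|

/-! Write `F`, `G`, `H` for the distribution functions of `We`, `Exp(1)` and `W`. On `[0, ∞)` the
equilibrium law has density `P[W > x] = 1 - H x` and `Exp(1)` has density `1 - G x`, so
`v = F - G` solves `v' = -v + (F - H)` with `v 0 = 0`. The density of `We` is at most `1`, so `F`
is `1`-Lipschitz and coupling `We` with `W` gives `|F - H| ≤ β + P[|We - W| > β] =: c`; a maximum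
principle for `v' ≤ c - v` and for `-v' ≤ c + v` then yields `|v| ≤ c`. -/

section Comparison

variable {v w : ℝ → ℝ} {c : ℝ}

theorem le_of_sub_eq_integral_of_le_sub (hw : ∀ a b, IntervalIntegrable w volume a b)
    (hvw : ∀ a b, 0 ≤ a → a ≤ b → v b - v a = ∫ x in a..b, w x)
    (hv0 : v 0 ≤ c) (hwv : ∀ x, 0 ≤ x → w x ≤ c - v x) {z : ℝ} (hz : 0 ≤ z) : v z ≤ c := by
  have hv : ContinuousOn v (Ici 0) :=
    ((intervalIntegral.continuous_primitive hw 0).const_add (v 0)).continuousOn.congr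
      fun x hx => eq_add_of_sub_eq' (hvw 0 x le_rfl hx)
  by_contra! hcz
  obtain ⟨m, hm, hmax⟩ :=
    isCompact_Icc.exists_isMaxOn (nonempty_Icc.2 hz) (hv.mono Icc_subset_Ici_self)
  have hcm : c < v m := hcz.trans_le (hmax ⟨hz, le_rfl⟩)
  have hm0 : 0 < m := hm.1.lt_of_ne (by rintro rfl; linarith)
  obtain ⟨l, hlm, hl⟩ : ∃ l < m, Ioo l m ⊆ {x | c < v x} :=
    mem_nhdsLT_iff_exists_Ioo_subset.1 <| nhdsWithin_le_nhds <|
      (hv.continuousAt (Ici_mem_nhds hm0)).eventually (lt_mem_nhds hcm)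
  set a := max l 0
  have ham : a < m := max_lt hlm hm0
  -- on `(a, m)` we have `w ≤ c - v < 0`, so `v` decreases there, against the maximality of `v m`
  have hint : ∫ x in a..m, w x < 0 := by
    rw [← neg_pos, ← intervalIntegral.integral_neg]
    refine intervalIntegral.intervalIntegral_pos_of_pos_on (hw a m).neg (fun x hx => ?_) ham
    have hvx : c < v x := hl ⟨(le_max_left _ _).trans_lt hx.1, hx.2⟩
    linarith [hwv x ((le_max_right _ _).trans hx.1.le)]
  have hva : v a ≤ v m := hmax ⟨le_max_right _ _, ham.le.trans hm.2⟩
  linarith [hvw a m (le_max_right _ _) ham.le]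

theorem abs_le_of_sub_eq_integral_of_abs_add_le (hw : ∀ a b, IntervalIntegrable w volume a b)
    (hvw : ∀ a b, 0 ≤ a → a ≤ b → v b - v a = ∫ x in a..b, w x)
    (hv0 : |v 0| ≤ c) (hwv : ∀ x, 0 ≤ x → |w x + v x| ≤ c) {z : ℝ} (hz : 0 ≤ z) :
    |v z| ≤ c := by
  have hneg : -v z ≤ c :=
    le_of_sub_eq_integral_of_le_sub (v := -v) (w := -w) (fun a b => (hw a b).neg)
      (fun a b ha hab => by
        simp only [Pi.neg_apply, intervalIntegral.integral_neg, ← hvw a b ha hab]; ring)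
      (by rw [Pi.neg_apply]; linarith [(abs_le.1 hv0).1])
      (fun x hx => by simp only [Pi.neg_apply]; linarith [(abs_le.1 (hwv x hx)).1]) hz
  exact abs_le.2 ⟨by linarith, le_of_sub_eq_integral_of_le_sub hw hvw (abs_le.1 hv0).2
    (fun x hx => by linarith [(abs_le.1 (hwv x hx)).2]) hz⟩

end Comparison

section Coupling

variable {Ω : Type*} [MeasurableSpace Ω] {μ : Measure Ω} [IsFiniteMeasure μ]

theorem measureReal_le_le_measureReal_le_add (X Y : Ω → ℝ) (x β : ℝ) :
    μ.real {ω | X ω ≤ x} ≤ μ.real {ω | Y ω ≤ x + β} + μ.real {ω | β < |X ω - Y ω|} := by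
  refine (measureReal_mono fun ω (hω : X ω ≤ x) => ?_).trans (measureReal_union_le _ _)
  by_cases h : β < |X ω - Y ω|
  · exact Or.inr h
  · exact Or.inl (by linarith [(abs_le.1 (not_lt.1 h)).1] : Y ω ≤ x + β)

theorem abs_measureReal_le_sub_measureReal_le_le {X Y : Ω → ℝ} {β : ℝ}
    (hX : ∀ x, μ.real {ω | X ω ≤ x + β} ≤ μ.real {ω | X ω ≤ x} + β) (x : ℝ) :
    |μ.real {ω | X ω ≤ x} - μ.real {ω | Y ω ≤ x}| ≤ β + μ.real {ω | β < |X ω - Y ω|} := by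
  have hXY := measureReal_le_le_measureReal_le_add (μ := μ) X Y (x - β) β
  have hYX := measureReal_le_le_measureReal_le_add (μ := μ) Y X x β
  have hXβ := hX (x - β)
  simp_rw [abs_sub_comm (Y _)] at hYX
  rw [sub_add_cancel] at hXY hXβ
  exact abs_le.2 ⟨by linarith [hX x], by linarith⟩

end Coupling

theorem measureReal_Iic_add_le_of_le_volume {ν : Measure ℝ} [IsFiniteMeasure ν]
    (hν : ν ≤ volume) (x : ℝ) {β : ℝ} (hβ : 0 ≤ β) : ν.real (Iic (x + β)) ≤ ν.real (Iic x) + β := by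
  rw [← Iic_union_Ioc_eq_Iic (le_add_of_nonneg_right hβ)]
  refine (measureReal_union_le _ _).trans (add_le_add le_rfl ?_)
  calc ν.real (Ioc x (x + β)) ≤ volume.real (Ioc x (x + β)) :=
      ENNReal.toReal_mono (by simp) (hν _)
    _ = β := by rw [Real.volume_real_Ioc_of_le (by linarith), add_sub_cancel_left]

theorem withDensity_indicator_Ici_apply_Iic (f : ℝ → ENNReal) (z : ℝ) :
    volume.withDensity ((Ici 0).indicator f) (Iic z) = ∫⁻ x in Ioc 0 z, f x := by
  rw [withDensity_apply _ measurableSet_Iic, lintegral_indicator measurableSet_Ici,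
    Measure.restrict_restrict measurableSet_Ici, Ici_inter_Iic]
  exact setLIntegral_congr Ioc_ae_eq_Icc.symm

theorem measureReal_expMeasure_one_Iic (z : ℝ) :
    (expMeasure 1).real (Iic z) = if 0 ≤ z then 1 - Real.exp (-z) else 0 := by
  have := isProbabilityMeasure_expMeasure one_pos
  rw [← cdf_eq_real, cdf_expMeasure_eq one_pos, one_mul]

theorem measureReal_expMeasure_one_Iic_of_nonpos {z : ℝ} (hz : z ≤ 0) :
    (expMeasure 1).real (Iic z) = 0 := by
  rw [measureReal_expMeasure_one_Iic]
  split_ifs with h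
  · rw [le_antisymm hz h, neg_zero, Real.exp_zero, sub_self]
  · rfl

theorem measureReal_expMeasure_one_Iic_sub_Iic {a b : ℝ} (ha : 0 ≤ a) (hab : a ≤ b) :
    (expMeasure 1).real (Iic b) - (expMeasure 1).real (Iic a) =
      ∫ x in a..b, Real.exp (-x) := by
  rw [measureReal_expMeasure_one_Iic, measureReal_expMeasure_one_Iic, if_pos ha,
    if_pos (ha.trans hab), intervalIntegral.integral_comp_neg (fun x => Real.exp x), integral_exp]
  ring

theorem antitone_measureReal_lt {Ω : Type*} [MeasurableSpace Ω] (μ : Measure Ω)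
    [IsFiniteMeasure μ] (W : Ω → ℝ) : Antitone fun x => μ.real {ω | x < W ω} :=
  fun _ _ hxy => measureReal_mono fun _ hω => hxy.trans_lt hω

theorem measureReal_lt_eq_one_sub {Ω : Type*} [MeasurableSpace Ω] {μ : Measure Ω}
    [IsProbabilityMeasure μ] {W : Ω → ℝ} (hW : Measurable W) (x : ℝ) :
    μ.real {ω | x < W ω} = 1 - μ.real {ω | W ω ≤ x} := by
  rw [← probReal_compl_eq_one_sub (s := {ω | W ω ≤ x}) (hW measurableSet_Iic)]
  simp only [compl_ofPred, not_le]

namespace IsEquilibrium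

variable {Ω : Type*} [MeasurableSpace Ω] {μ : Measure Ω} {W We : Ω → ℝ}

theorem map_eq_withDensity (h : IsEquilibrium μ W We) (hEW : ∫ ω, W ω ∂μ = 1) :
    μ.map We = volume.withDensity ((Ici 0).indicator fun x => μ {ω | x < W ω}) := by
  rw [h, hEW, ENNReal.ofReal_one]
  simp_rw [div_one]
  rfl

theorem map_le_volume [IsProbabilityMeasure μ] (h : IsEquilibrium μ W We)
    (hEW : ∫ ω, W ω ∂μ = 1) : μ.map We ≤ volume := by
  rw [h.map_eq_withDensity hEW]
  conv_rhs => rw [← withDensity_one (μ := volume)]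
  exact withDensity_mono (ae_of_all _ fun x => indicator_apply_le' (fun _ => prob_le_one)
    fun _ => zero_le)

theorem measureReal_map_Iic [IsFiniteMeasure μ] (h : IsEquilibrium μ W We)
    (hEW : ∫ ω, W ω ∂μ = 1) (z : ℝ) :
    (μ.map We).real (Iic z) = ∫ x in Ioc 0 z, μ.real {ω | x < W ω} := by
  have hanti : Antitone fun x => μ {ω | x < W ω} :=
    fun x y hxy => measure_mono fun ω (hω : y < W ω) => hxy.trans_lt hω
  rw [measureReal_def, h.map_eq_withDensity hEW, withDensity_indicator_Ici_apply_Iic,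
    ← integral_toReal hanti.measurable.aemeasurable (ae_of_all _ fun _ => measure_lt_top _ _)]
  rfl

theorem measureReal_map_Iic_of_nonpos [IsFiniteMeasure μ] (h : IsEquilibrium μ W We)
    (hEW : ∫ ω, W ω ∂μ = 1) {z : ℝ} (hz : z ≤ 0) : (μ.map We).real (Iic z) = 0 := by
  rw [h.measureReal_map_Iic hEW, Ioc_eq_empty_of_le hz, Measure.restrict_empty,
    integral_zero_measure]

theorem measureReal_map_Iic_sub_Iic [IsFiniteMeasure μ] (h : IsEquilibrium μ W We)
    (hEW : ∫ ω, W ω ∂μ = 1) {a b : ℝ} (ha : 0 ≤ a) (hab : a ≤ b) :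
    (μ.map We).real (Iic b) - (μ.map We).real (Iic a) =
      ∫ x in a..b, μ.real {ω | x < W ω} := by
  have hint (z : ℝ) : IntervalIntegrable (fun x => μ.real {ω | x < W ω}) volume 0 z :=
    (antitone_measureReal_lt μ W).intervalIntegrable
  rw [h.measureReal_map_Iic hEW, h.measureReal_map_Iic hEW,
    ← intervalIntegral.integral_of_le ha, ← intervalIntegral.integral_of_le (ha.trans hab),
    intervalIntegral.integral_interval_sub_left (hint b) (hint a)]

theorem abs_measureReal_map_Iic_sub_le [IsProbabilityMeasure μ] (h : IsEquilibrium μ W We)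
    (hEW : ∫ ω, W ω ∂μ = 1) (hWe : Measurable We) {β : ℝ} (hβ : 0 ≤ β) (x : ℝ) :
    |(μ.map We).real (Iic x) - μ.real {ω | W ω ≤ x}| ≤
      β + μ.real {ω | β < |We ω - W ω|} := by
  have hF (y : ℝ) : (μ.map We).real (Iic y) = μ.real {ω | We ω ≤ y} :=
    map_measureReal_apply hWe measurableSet_Iic
  rw [hF]
  refine abs_measureReal_le_sub_measureReal_le_le (fun y => ?_) x
  simpa only [hF] using measureReal_Iic_add_le_of_le_volume (h.map_le_volume hEW) y hβ

end IsEquilibrium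

theorem kolmogorov_bound_equilibrium_law_general
    {Ω : Type*} [MeasurableSpace Ω] (μ : Measure Ω) [IsProbabilityMeasure μ]
    (W We : Ω → ℝ) (hWmeas : Measurable W) (hWemeas : Measurable We)
    (hEW : ∫ ω, W ω ∂μ = 1)
    (hWe : IsEquilibrium μ W We)
    (β : ℝ) (hβ : 0 < β) :
    dK (Measure.map We μ) (expMeasure 1)
      ≤ β + (μ {ω | β < |We ω - W ω|}).toReal := by
  set F : ℝ → ℝ := fun z => (μ.map We).real (Iic z)
  set G : ℝ → ℝ := fun z => (expMeasure 1).real (Iic z)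
  have hFG_nonpos {z : ℝ} (hz : z ≤ 0) : |(F - G) z| = 0 := by
    simp only [Pi.sub_apply, F, G, hWe.measureReal_map_Iic_of_nonpos hEW hz,
      measureReal_expMeasure_one_Iic_of_nonpos hz, sub_zero, abs_zero]
  refine ciSup_le fun z => ?_
  change |(F - G) z| ≤ β + μ.real {ω | β < |We ω - W ω|}
  rcases le_total z 0 with hz | hz
  · exact (hFG_nonpos hz).trans_le (by positivity)
  have hSint (a b : ℝ) : IntervalIntegrable (fun x => μ.real {ω | x < W ω}) volume a b :=
    (antitone_measureReal_lt μ W).intervalIntegrable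
  have hexpint (a b : ℝ) : IntervalIntegrable (fun x => Real.exp (-x)) volume a b :=
    (by fun_prop : Continuous fun x => Real.exp (-x)).intervalIntegrable a b
  refine abs_le_of_sub_eq_integral_of_abs_add_le
    (w := fun x => μ.real {ω | x < W ω} - Real.exp (-x)) (fun a b => (hSint a b).sub (hexpint a b))
    (fun a b ha hab => ?_) ((hFG_nonpos le_rfl).trans_le (by positivity)) (fun x hx => ?_) hz
  · rw [intervalIntegral.integral_sub (hSint a b) (hexpint a b),
      ← hWe.measureReal_map_Iic_sub_Iic hEW ha hab, ← measureReal_expMeasure_one_Iic_sub_Iic ha hab]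
    simp only [Pi.sub_apply, F, G]
    ring
  · convert hWe.abs_measureReal_map_Iic_sub_le hEW hWemeas hβ.le x using 2
    simp only [measureReal_lt_eq_one_sub hWmeas, Pi.sub_apply, F, G, measureReal_expMeasure_one_Iic,
      if_pos hx]
    ring

theorem kolmogorov_bound_equilibrium_law
    {Ω : Type*} [MeasurableSpace Ω] (μ : Measure Ω) [IsProbabilityMeasure μ]
    (W We : Ω → ℝ) (hWmeas : Measurable W) (hWemeas : Measurable We)
    (hWnonneg : ∀ ω, 0 ≤ W ω) (hWint : Integrable W μ)
    (hEW : ∫ ω, W ω ∂μ = 1)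
    (hWe : IsEquilibrium μ W We)
    (β : ℝ) (hβ : 0 < β) :
    dK (Measure.map We μ) (expMeasure 1)
      ≤ β + (μ {ω | β < |We ω - W ω|}).toReal :=
  kolmogorov_bound_equilibrium_law_general μ W We hWmeas hWemeas hEW hWe β hβ

end
end

section
/- Let W be a non-negative random variable with E W = 1 and E W² < ∞, and let W^e be a random variable having the equilibrium distribution with respect to W, defined on the same probability space. Then d_W(L(W), Exp(1)) ≤ 2·E|W^e − W|. -/
open MeasureTheory ProbabilityTheory Set

noncomputable section

/-!
Stein's method for the exponential law. For a `K`-Lipschitz `h`, the function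
`f x = -eˣ ∫ₓ^∞ h t e⁻ᵗ dt` satisfies `f' = f + h` and `f 0 = -E h(Z)` with `Z ~ Exp(1)`, and
`ψ = f'` is bounded by `K` and `2K`-Lipschitz. The equilibrium coupling gives
`E f(W) - f 0 = E ψ(We)`, hence `E h(W) - E h(Z) = E[ψ(W) - ψ(We)]`, which is at most
`2K E|We - W|` in absolute value. The identity for `We` holds because its law is the second
marginal of `μ ⊗ Lebesgue` restricted to `{(ω, x) | 0 ≤ x < W ω}`, so Fubini and the
fundamental theorem of calculus turn `E ψ(We)` into `E ∫₀^W ψ = E f(W) - f 0`.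
-/

open Real Filter Topology
open scoped ENNReal NNReal

private lemma hasDerivAt_antideriv_sub_mul_exp_neg (x t : ℝ) :
    HasDerivAt (fun t => -(t - x + 1) * exp (-t)) ((t - x) * exp (-t)) t :=
  ((((hasDerivAt_id t).sub_const x).add_const 1).fun_neg.fun_mul
    (hasDerivAt_neg t).exp).congr_deriv (by simp only [id]; ring)

private lemma tendsto_antideriv_sub_mul_exp_neg (x : ℝ) :
    Tendsto (fun t => -(t - x + 1) * exp (-t)) atTop (𝓝 0) := by
  have h := (tendsto_pow_mul_exp_neg_atTop_nhds_zero 1).neg.add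
    ((tendsto_pow_mul_exp_neg_atTop_nhds_zero 0).const_mul (x - 1))
  simp only [neg_zero, mul_zero, add_zero] at h
  convert h using 2 with t
  ring

lemma integrableOn_sub_mul_exp_neg_Ioi (x : ℝ) :
    IntegrableOn (fun t => (t - x) * exp (-t)) (Ioi x) :=
  integrableOn_Ioi_deriv_of_nonneg (by fun_prop)
    (fun t _ => hasDerivAt_antideriv_sub_mul_exp_neg x t)
    (fun t ht => mul_nonneg (sub_nonneg.2 (le_of_lt ht)) (exp_pos _).le)
    (tendsto_antideriv_sub_mul_exp_neg x)

lemma integral_sub_mul_exp_neg_Ioi (x : ℝ) :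
    ∫ t in Ioi x, (t - x) * exp (-t) = exp (-x) := by
  rw [integral_Ioi_of_hasDerivAt_of_nonneg (by fun_prop)
    (fun t _ => hasDerivAt_antideriv_sub_mul_exp_neg x t)
    (fun t ht => mul_nonneg (sub_nonneg.2 (le_of_lt ht)) (exp_pos _).le)
    (tendsto_antideriv_sub_mul_exp_neg x)]
  simp

lemma integral_expMeasure_one (h : ℝ → ℝ) :
    ∫ x, h x ∂expMeasure 1 = ∫ t in Ioi 0, h t * exp (-t) := by
  have hpdf (x : ℝ) :
      (exponentialPDF 1 x).toReal • h x = (Ici 0).indicator (fun t => h t * exp (-t)) x := by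
    rw [exponentialPDF_eq]
    by_cases hx : 0 ≤ x <;> simp [hx, (exp_pos _).le, mul_comm]
  rw [show expMeasure 1 = volume.withDensity (exponentialPDF 1) from rfl,
    integral_withDensity_eq_integral_toReal_smul (f := exponentialPDF 1)
      (measurable_exponentialPDFReal 1).ennreal_ofReal
      (ae_of_all _ fun _ => ENNReal.ofReal_lt_top), funext hpdf,
    integral_indicator measurableSet_Ici, integral_Ici_eq_integral_Ioi]

section SteinSolution

variable {h : ℝ → ℝ} {K : ℝ≥0}

lemma LipschitzWith.integrableOn_mul_exp_neg_Ioi (hh : LipschitzWith K h) (x : ℝ) :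
    IntegrableOn (fun t => h t * exp (-t)) (Ioi x) := by
  refine Integrable.mono' (((integrableOn_exp_neg_Ioi x).const_mul |h x|).add
    ((integrableOn_sub_mul_exp_neg_Ioi x).const_mul K))
    (hh.continuous.mul (by fun_prop)).aestronglyMeasurable.restrict ?_
  filter_upwards [self_mem_ae_restrict measurableSet_Ioi] with t ht
  have hdist : |h t - h x| ≤ K * (t - x) := by
    simpa [Real.dist_eq, abs_of_pos (sub_pos.2 (mem_Ioi.1 ht))] using hh.dist_le_mul t x
  have hbound : |h t| ≤ |h x| + K * (t - x) := by
    linarith [abs_sub_abs_le_abs_sub (h t) (h x)]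
  rw [Pi.add_apply, norm_mul, norm_of_nonneg (exp_pos _).le, Real.norm_eq_abs]
  nlinarith [exp_pos (-t)]

def expSteinSolution (h : ℝ → ℝ) (x : ℝ) : ℝ :=
  -(exp x * ∫ t in Ioi x, h t * exp (-t))

lemma expSteinSolution_zero (h : ℝ → ℝ) :
    expSteinSolution h 0 = -∫ x, h x ∂expMeasure 1 := by
  simp [expSteinSolution, integral_expMeasure_one]

lemma hasDerivAt_expSteinSolution (hh : LipschitzWith K h) (x : ℝ) :
    HasDerivAt (expSteinSolution h) (expSteinSolution h x + h x) x := by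
  have hcont : Continuous fun t => h t * exp (-t) := hh.continuous.mul (by fun_prop)
  have htail : (fun y => ∫ t in Ioi y, h t * exp (-t))
      = fun y => (∫ t in Ioi 0, h t * exp (-t)) - ∫ t in (0 : ℝ)..y, h t * exp (-t) := by
    funext y
    rw [← intervalIntegral.integral_Ioi_sub_Ioi' (hh.integrableOn_mul_exp_neg_Ioi 0)
      (hh.integrableOn_mul_exp_neg_Ioi y), sub_sub_cancel]
  have hderiv : HasDerivAt (fun y => ∫ t in Ioi y, h t * exp (-t)) (-(h x * exp (-x))) x := by
    rw [htail]
    exact ((hcont.integral_hasStrictDerivAt 0 x).hasDerivAt).const_sub _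
  refine ((hasDerivAt_exp x).mul hderiv).neg.congr_deriv ?_
  rw [expSteinSolution, exp_neg]
  field_simp
  ring

lemma expSteinSolution_add_eq (hh : LipschitzWith K h) (x : ℝ) :
    expSteinSolution h x + h x = exp x * ∫ t in Ioi x, (h x - h t) * exp (-t) := by
  simp_rw [sub_mul]
  rw [integral_sub ((integrableOn_exp_neg_Ioi x).const_mul (h x))
    (hh.integrableOn_mul_exp_neg_Ioi x), integral_const_mul, integral_exp_neg_Ioi,
    expSteinSolution, mul_sub, ← mul_assoc, mul_right_comm, ← exp_add, add_neg_cancel, exp_zero]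
  ring

lemma abs_expSteinSolution_add_le (hh : LipschitzWith K h) (x : ℝ) :
    |expSteinSolution h x + h x| ≤ K := by
  have hint : |∫ t in Ioi x, (h x - h t) * exp (-t)| ≤ K * exp (-x) := by
    rw [← integral_sub_mul_exp_neg_Ioi, ← integral_const_mul]
    refine (abs_integral_le_integral_abs).trans (setIntegral_mono_on ?_
      ((integrableOn_sub_mul_exp_neg_Ioi x).const_mul _) measurableSet_Ioi fun t ht => ?_)
    · simp_rw [sub_mul]
      exact (((integrableOn_exp_neg_Ioi x).const_mul (h x)).sub
        (hh.integrableOn_mul_exp_neg_Ioi x)).abs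
    · have hdist : |h x - h t| ≤ K * (t - x) := by
        simpa [Real.dist_eq, abs_sub_comm x t, abs_of_pos (sub_pos.2 (mem_Ioi.1 ht))] using
          hh.dist_le_mul x t
      rw [abs_mul, abs_of_pos (exp_pos _), ← mul_assoc]
      exact mul_le_mul_of_nonneg_right hdist (exp_pos _).le
  rw [expSteinSolution_add_eq hh, abs_mul, abs_of_pos (exp_pos x)]
  calc exp x * |∫ t in Ioi x, (h x - h t) * exp (-t)| ≤ exp x * (K * exp (-x)) :=
        mul_le_mul_of_nonneg_left hint (exp_pos x).le
    _ = K := by rw [mul_left_comm, ← exp_add, add_neg_cancel, exp_zero, mul_one]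

lemma lipschitzWith_expSteinSolution (hh : LipschitzWith K h) :
    LipschitzWith K (expSteinSolution h) :=
  lipschitzWith_of_nnnorm_deriv_le (fun x => (hasDerivAt_expSteinSolution hh x).differentiableAt)
    fun x => by
      rw [(hasDerivAt_expSteinSolution hh x).deriv, ← NNReal.coe_le_coe, coe_nnnorm]
      exact abs_expSteinSolution_add_le hh x

lemma lipschitzWith_expSteinSolution_add (hh : LipschitzWith K h) :
    LipschitzWith (2 * K) (fun x => expSteinSolution h x + h x) := by
  simpa [two_mul] using (lipschitzWith_expSteinSolution hh).add hh

end SteinSolution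

lemma LipschitzWith.integrable_comp {Ω E F : Type*} [MeasurableSpace Ω] {μ : Measure Ω}
    [IsFiniteMeasure μ] [NormedAddCommGroup E] [NormedAddCommGroup F] {K : ℝ≥0} {g : E → F}
    {X : Ω → E} (hg : LipschitzWith K g) (hX : Integrable X μ) :
    Integrable (fun ω => g (X ω)) μ := by
  refine Integrable.mono' ((integrable_const ‖g 0‖).add (hX.norm.const_mul K))
    (hg.continuous.comp_aestronglyMeasurable hX.1) (ae_of_all _ fun ω => ?_)
  have := hg.dist_le_mul (X ω) 0
  rw [dist_eq_norm, dist_zero_right] at this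
  rw [Pi.add_apply]
  linarith [norm_le_insert' (g (X ω)) (g 0)]

section Equilibrium

variable {Ω : Type*} [MeasurableSpace Ω] {μ : Measure Ω} {W We : Ω → ℝ}

def subgraph (W : Ω → ℝ) : Set (Ω × ℝ) := {p | p.2 ∈ Ico 0 (W p.1)}

lemma measurableSet_subgraph (hW : Measurable W) : MeasurableSet (subgraph W) :=
  (measurableSet_le measurable_const measurable_snd).inter
    (measurableSet_lt measurable_snd (hW.comp measurable_fst))

lemma prod_volume_subgraph [SFinite μ] (hW : Measurable W) :
    μ.prod volume (subgraph W) = ∫⁻ ω, ENNReal.ofReal (W ω) ∂μ := by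
  rw [Measure.prod_apply (measurableSet_subgraph hW)]
  refine lintegral_congr fun ω => ?_
  rw [show Prod.mk ω ⁻¹' subgraph W = Ico 0 (W ω) from rfl, Real.volume_Ico, sub_zero]

lemma IsEquilibrium.map_eq [SFinite μ] (hW : Measurable W) (hEW : ∫ ω, W ω ∂μ = 1)
    (hWe : IsEquilibrium μ W We) :
    μ.map We = ((μ.prod volume).restrict (subgraph W)).map Prod.snd := by
  ext A hA
  rw [hWe, hEW, withDensity_apply _ hA, Measure.map_apply measurable_snd hA,
    Measure.restrict_apply (measurable_snd hA),
    Measure.prod_apply_symm ((measurable_snd hA).inter (measurableSet_subgraph hW)),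
    ← lintegral_indicator hA]
  refine lintegral_congr fun x => ?_
  by_cases hxA : x ∈ A <;> by_cases hx : 0 ≤ x <;> simp [hxA, hx, subgraph, Set.preimage]

lemma IsEquilibrium.integral_comp [SFinite μ] (hW : Measurable W) (hWe_meas : Measurable We)
    (hEW : ∫ ω, W ω ∂μ = 1) (hWe : IsEquilibrium μ W We) {ψ : ℝ → ℝ} (hψ : Measurable ψ)
    {C : ℝ} (hψC : ∀ x, |ψ x| ≤ C) :
    ∫ ω, ψ (We ω) ∂μ = ∫ ω, (∫ x in Ico 0 (W ω), ψ x) ∂μ := by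
  have hWint : Integrable W μ := .of_integral_ne_zero (by simp [hEW])
  have hfin : μ.prod volume (subgraph W) ≠ ∞ := by
    rw [prod_volume_subgraph hW]
    exact hWint.lintegral_lt_top.ne
  have hint : Integrable ((subgraph W).indicator fun p => ψ p.2) (μ.prod volume) :=
    (integrable_indicator_iff (measurableSet_subgraph hW)).2 <|
      Measure.integrableOn_of_bounded hfin (hψ.comp measurable_snd).aestronglyMeasurable
        (ae_of_all _ fun p => (Real.norm_eq_abs _).trans_le (hψC p.2))
  rw [← integral_map hWe_meas.aemeasurable hψ.aestronglyMeasurable, hWe.map_eq hW hEW,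
    integral_map measurable_snd.aemeasurable hψ.aestronglyMeasurable,
    ← integral_indicator (measurableSet_subgraph hW), integral_prod _ hint]
  congr 1 with ω
  rw [← integral_indicator measurableSet_Ico]
  rfl

lemma IsEquilibrium.integrable [SFinite μ] (hW : Measurable W) (hWe_meas : Measurable We)
    (hEW : ∫ ω, W ω ∂μ = 1) (hWe : IsEquilibrium μ W We)
    (hW2 : Integrable (fun ω => W ω ^ 2) μ) : Integrable We μ := by
  refine ⟨hWe_meas.aestronglyMeasurable, ?_⟩
  have hinner (w : ℝ) : ∫⁻ x in Ico 0 w, ‖x‖ₑ ≤ ENNReal.ofReal (w ^ 2) := by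
    calc ∫⁻ x in Ico 0 w, ‖x‖ₑ ≤ ∫⁻ _ in Ico 0 w, ENNReal.ofReal w :=
          setLIntegral_mono measurable_const fun x hx => by
            rw [Real.enorm_eq_ofReal_abs, abs_of_nonneg hx.1]
            exact ENNReal.ofReal_le_ofReal hx.2.le
      _ = ENNReal.ofReal w * ENNReal.ofReal w := by
          rw [setLIntegral_const, Real.volume_Ico, sub_zero]
      _ ≤ ENNReal.ofReal (w ^ 2) := by
          rcases le_or_gt 0 w with hw | hw
          · rw [sq, ENNReal.ofReal_mul hw]
          · simp [ENNReal.ofReal_of_nonpos hw.le]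
  calc ∫⁻ ω, ‖We ω‖ₑ ∂μ = ∫⁻ ω, (∫⁻ x in Ico 0 (W ω), ‖x‖ₑ) ∂μ := by
        rw [← lintegral_map measurable_enorm hWe_meas, hWe.map_eq hW hEW,
          lintegral_map measurable_enorm measurable_snd,
          ← lintegral_indicator (measurableSet_subgraph hW),
          lintegral_prod (f := (subgraph W).indicator fun p => ‖p.2‖ₑ)
            ((measurable_enorm.comp measurable_snd).indicator
              (measurableSet_subgraph hW)).aemeasurable]
        refine lintegral_congr fun ω => ?_
        rw [← lintegral_indicator measurableSet_Ico]
        rfl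
    _ ≤ ∫⁻ ω, ENNReal.ofReal (W ω ^ 2) ∂μ := lintegral_mono fun ω => hinner (W ω)
    _ < ∞ := hW2.lintegral_lt_top

lemma IsEquilibrium.integral_deriv_comp [SFinite μ] (hW : Measurable W)
    (hWe_meas : Measurable We) (hW_nonneg : ∀ ω, 0 ≤ W ω) (hEW : ∫ ω, W ω ∂μ = 1)
    (hWe : IsEquilibrium μ W We) {f f' : ℝ → ℝ} (hf : ∀ x, HasDerivAt f (f' x) x)
    (hf'_cont : Continuous f') {C : ℝ} (hf'C : ∀ x, |f' x| ≤ C) :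
    ∫ ω, f' (We ω) ∂μ = ∫ ω, (f (W ω) - f 0) ∂μ := by
  rw [hWe.integral_comp hW hWe_meas hEW hf'_cont.measurable hf'C]
  congr 1 with ω
  rw [integral_Ico_eq_integral_Ioo, ← integral_Ioc_eq_integral_Ioo,
    ← intervalIntegral.integral_of_le (hW_nonneg ω),
    intervalIntegral.integral_eq_sub_of_hasDerivAt (fun x _ => hf x)
      (hf'_cont.intervalIntegrable _ _)]

end Equilibrium

lemma IsEquilibrium.abs_integral_sub_integral_expMeasure_le {Ω : Type*} [MeasurableSpace Ω]
    {μ : Measure Ω} [IsProbabilityMeasure μ] {W We : Ω → ℝ} (hW : Measurable W)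
    (hWe_meas : Measurable We) (hW_nonneg : ∀ ω, 0 ≤ W ω) (hEW : ∫ ω, W ω ∂μ = 1)
    (hWe : IsEquilibrium μ W We) (hWe_int : Integrable We μ) {K : ℝ≥0} {h : ℝ → ℝ}
    (hh : LipschitzWith K h) :
    |∫ ω, h (W ω) ∂μ - ∫ x, h x ∂expMeasure 1| ≤ 2 * K * ∫ ω, |We ω - W ω| ∂μ := by
  set f := expSteinSolution h
  set ψ := fun x => f x + h x
  have hW_int : Integrable W μ := .of_integral_ne_zero (by simp [hEW])
  have hψ_bdd (X : Ω → ℝ) (hX : Measurable X) : Integrable (fun ω => ψ (X ω)) μ :=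
    .of_bound ((lipschitzWith_expSteinSolution_add hh).continuous.measurable.comp
      hX).aestronglyMeasurable K (ae_of_all _ fun ω => abs_expSteinSolution_add_le hh (X ω))
  have hequil : ∫ ω, ψ (We ω) ∂μ = ∫ ω, f (W ω) ∂μ - f 0 := by
    rw [hWe.integral_deriv_comp hW hWe_meas hW_nonneg hEW (hasDerivAt_expSteinSolution hh)
      (lipschitzWith_expSteinSolution_add hh).continuous (abs_expSteinSolution_add_le hh),
      integral_sub ((lipschitzWith_expSteinSolution hh).integrable_comp hW_int)
        (integrable_const _), integral_const, probReal_univ, one_smul]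
  have hsplit : ∫ ω, ψ (W ω) ∂μ = ∫ ω, f (W ω) ∂μ + ∫ ω, h (W ω) ∂μ :=
    integral_add ((lipschitzWith_expSteinSolution hh).integrable_comp hW_int)
      (hh.integrable_comp hW_int)
  have hdiff : ∫ ω, h (W ω) ∂μ - ∫ x, h x ∂expMeasure 1 = ∫ ω, (ψ (W ω) - ψ (We ω)) ∂μ := by
    rw [integral_sub (hψ_bdd W hW) (hψ_bdd We hWe_meas), hequil, hsplit,
      show f 0 = _ from expSteinSolution_zero h]
    ring
  calc |∫ ω, h (W ω) ∂μ - ∫ x, h x ∂expMeasure 1|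
      ≤ ∫ ω, |ψ (W ω) - ψ (We ω)| ∂μ := hdiff ▸ abs_integral_le_integral_abs
    _ ≤ ∫ ω, 2 * K * |We ω - W ω| ∂μ := by
        refine integral_mono ((hψ_bdd W hW).sub (hψ_bdd We hWe_meas)).abs
          ((hWe_int.sub hW_int).abs.const_mul _) fun ω => ?_
        simpa [Real.dist_eq, abs_sub_comm] using
          (lipschitzWith_expSteinSolution_add hh).dist_le_mul (W ω) (We ω)
    _ = 2 * K * ∫ ω, |We ω - W ω| ∂μ := integral_const_mul _ _

theorem wasserstein_bound_equilibrium_coupling_general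
    {Ω : Type*} [MeasurableSpace Ω] (μ : Measure Ω) [IsProbabilityMeasure μ]
    (W We : Ω → ℝ) (hWmeas : Measurable W) (hWemeas : Measurable We)
    (hWnonneg : ∀ ω, 0 ≤ W ω)
    (hW2 : Integrable (fun ω => (W ω) ^ 2) μ)
    (hEW : ∫ ω, W ω ∂μ = 1)
    (hWe : IsEquilibrium μ W We) :
    dW (Measure.map W μ) (expMeasure 1) ≤ 2 * ∫ ω, |We ω - W ω| ∂μ := by
  have hWe_int := hWe.integrable hWmeas hWemeas hEW hW2
  refine Real.iSup_le (fun ⟨h, hh⟩ => ?_) (by positivity)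
  rw [integral_map hWmeas.aemeasurable hh.continuous.aestronglyMeasurable]
  simpa using hWe.abs_integral_sub_integral_expMeasure_le hWmeas hWemeas hWnonneg hEW hWe_int hh

theorem wasserstein_bound_equilibrium_coupling
    {Ω : Type*} [MeasurableSpace Ω] (μ : Measure Ω) [IsProbabilityMeasure μ]
    (W We : Ω → ℝ) (hWmeas : Measurable W) (hWemeas : Measurable We)
    (hWnonneg : ∀ ω, 0 ≤ W ω) (hWint : Integrable W μ)
    (hW2 : Integrable (fun ω => (W ω) ^ 2) μ)
    (hEW : ∫ ω, W ω ∂μ = 1)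
    (hWe : IsEquilibrium μ W We) :
    dW (Measure.map W μ) (expMeasure 1) ≤ 2 * ∫ ω, |We ω - W ω| ∂μ :=
  wasserstein_bound_equilibrium_coupling_general μ W We hWmeas hWemeas hWnonneg hW2 hEW hWe

end
end
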